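/- arXiv:2509.06935 — 2 statements merged into one kernel-verified Lean document; each statement's English description precedes it below -/
import Mathlib

section
/- Let d ≥ 2 and 1 ≤ k ≤ d − 1 be integers, let n ∈ ℕ, and let S be a k-sphere in ℝ^d with |S ∩ [n]^d| = m. Suppose S is 1/2-nondegenerate with respect to [n]^d, i.e., S ∩ [n]^d is nonempty and every (k−1)-sphere contained in S contains at most m/2 points of [n]^d. Then the number of ordered (k+3)-tuples of pairwise distinct points of S ∩ [n]^d whose underlying set has spherical dimension k is at least m^{k+3}/2^{k+3}. -/
set_option maxHeartbeats 2000000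

/-- The grid `[n]^d`: points of `ℝ^d` with all coordinates integers in `{1, …, n}`. -/
def grid (d n : ℕ) : Set (EuclideanSpace ℝ (Fin d)) :=
  {x | ∀ i, ∃ m : ℕ, 1 ≤ m ∧ m ≤ n ∧ x i = (m : ℝ)}

/-- A `k`-sphere in `ℝ^d`: the intersection of an affine subspace `A` of dimension `k+1`
with a sphere centered at a point of `A` with positive radius. -/
def IsKSphere (d k : ℕ) (S : Set (EuclideanSpace ℝ (Fin d))) : Prop :=
  ∃ (A : AffineSubspace ℝ (EuclideanSpace ℝ (Fin d))) (c : EuclideanSpace ℝ (Fin d)) (ρ : ℝ),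
    Module.finrank ℝ A.direction = k + 1 ∧ c ∈ A ∧ 0 < ρ ∧
    S = (A : Set (EuclideanSpace ℝ (Fin d))) ∩ Metric.sphere c ρ

/-- A set `P ⊆ ℝ^d` has spherical dimension `k` if it is contained in some `k`-sphere
but in no `(k-1)`-sphere. -/
def HasSphericalDim (d k : ℕ) (P : Set (EuclideanSpace ℝ (Fin d))) : Prop :=
  (∃ S, IsKSphere d k S ∧ P ⊆ S) ∧ ¬ ∃ S, IsKSphere d (k - 1) S ∧ P ⊆ S

open Module Set Function EuclideanGeometry

lemma grid_finite' (d n : ℕ) : (grid d n).Finite := by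
  have h : grid d n
      ⊆ WithLp.toLp 2 '' Set.pi Set.univ (fun _ : Fin d => (fun m : ℕ => (m : ℝ)) '' (Set.Icc 1 n)) := by
    intro x hx
    refine ⟨x.ofLp, fun i _ => ?_, by simp⟩
    obtain ⟨m, h1, h2, h3⟩ := hx i
    exact ⟨m, ⟨h1, h2⟩, h3.symm⟩
  exact ((Set.Finite.pi (fun i => ((Set.finite_Icc 1 n).image _))).image _).subset h

lemma tuple_finite' {α : Type*} {G : Set α} (hG : G.Finite) (j : ℕ) :
    ({t : Fin j → α | ∀ i, t i ∈ G}).Finite := by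
  have h : ({t : Fin j → α | ∀ i, t i ∈ G}) ⊆ Set.pi Set.univ (fun _ : Fin j => G) := by
    intro t ht i _; exact ht i
  exact (Set.Finite.pi (fun _ => hG)).subset h

lemma snoc_card_le' {α : Type*} {j : ℕ} (U : Finset (Fin (j+1) → α)) (V : Finset (Fin j → α))
    (w : ℝ) (h : ∀ v ∈ V, ∃ W : Finset α, w ≤ (W.card : ℝ) ∧ ∀ x ∈ W, Fin.snoc v x ∈ U) :
    (V.card : ℝ) * w ≤ (U.card : ℝ) := by
  haveI : DecidableEq α := Classical.decEq α
  have key : ∀ v ∈ V, w ≤ (((U.filter (fun t => Fin.init t = v)).card : ℝ)) := by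
    intro v hv
    obtain ⟨W, hW, hWU⟩ := h v hv
    refine hW.trans ?_
    have hc : W.card ≤ (U.filter fun t => Fin.init t = v).card := by
      apply Finset.card_le_card_of_injOn (fun x => (Fin.snoc v x : Fin (j+1) → α))
      · intro x hx
        simp only [Finset.mem_filter]
        exact Finset.mem_filter.2 ⟨hWU x hx, by simp⟩
      · intro a _ b _ hab
        have := congrArg (fun t => t (Fin.last j)) hab
        simpa using this
    exact_mod_cast hc
  have hsum : (V.card : ℝ) * w ≤ ∑ v ∈ V, ((U.filter (fun t => Fin.init t = v)).card : ℝ) := by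
    have h0 := Finset.sum_le_sum key
    rwa [Finset.sum_const, nsmul_eq_mul] at h0
  refine hsum.trans ?_
  have h2 : ∑ v ∈ V, (U.filter (fun t => Fin.init t = v)).card ≤ U.card := by
    have hdisj : (V : Set (Fin j → α)).PairwiseDisjoint
        (fun v => U.filter (fun t => Fin.init t = v)) := by
      intro a _ b _ hab
      simp only [Finset.disjoint_left, Finset.mem_filter]
      rintro t ⟨_, rfl⟩ ⟨_, h2⟩
      exact hab h2
    calc ∑ v ∈ V, (U.filter (fun t => Fin.init t = v)).card
        = (V.biUnion (fun v => U.filter (fun t => Fin.init t = v))).card := by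
          rw [Finset.card_biUnion]
          intro a ha b hb hab; exact hdisj ha hb hab
      _ ≤ U.card := Finset.card_le_card (by
          intro t ht; rcases Finset.mem_biUnion.1 ht with ⟨v, _, ht⟩
          exact (Finset.filter_subset _ _) ht)
  calc (∑ v ∈ V, ((U.filter (fun t => Fin.init t = v)).card : ℝ))
      = ((∑ v ∈ V, (U.filter (fun t => Fin.init t = v)).card : ℕ) : ℝ) := by push_cast; ring
    _ ≤ (U.card : ℝ) := by exact_mod_cast h2

lemma exists_intermediate_submodule' {V : Type*} [AddCommGroup V] [Module ℝ V]
    [FiniteDimensional ℝ V] :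
    ∀ (N : ℕ) (p q : Submodule ℝ V), p ≤ q → ∀ r : ℕ, finrank ℝ p ≤ r → r ≤ finrank ℝ q →
      r - finrank ℝ p ≤ N → ∃ s : Submodule ℝ V, p ≤ s ∧ s ≤ q ∧ finrank ℝ s = r := by
  intro N
  induction N with
  | zero =>
    intro p q hpq r h1 h2 h3
    have : finrank ℝ p = r := by omega
    exact ⟨p, le_rfl, hpq, this⟩
  | succ N ih =>
    intro p q hpq r h1 h2 h3
    rcases eq_or_lt_of_le h1 with heq | hlt
    · exact ⟨p, le_rfl, hpq, heq⟩
    · have hpq' : p < q := by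
        rcases eq_or_lt_of_le hpq with rfl | h
        · omega
        · exact h
      obtain ⟨x, hxq, hxp⟩ := SetLike.exists_of_lt hpq'
      have hx0 : x ≠ 0 := fun h => hxp (h ▸ p.zero_mem)
      have hinf : p ⊓ (ℝ ∙ x) = ⊥ := by
        rw [Submodule.eq_bot_iff]
        rintro y ⟨hyp, hyx⟩
        rcases Submodule.mem_span_singleton.1 hyx with ⟨a, rfl⟩
        rcases eq_or_ne a 0 with rfl | ha
        · simp
        · exact absurd (by simpa [ha] using p.smul_mem a⁻¹ hyp) hxp
      have hrank : finrank ℝ ↥(p ⊔ (ℝ ∙ x)) = finrank ℝ p + 1 := by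
        have := Submodule.finrank_sup_add_finrank_inf_eq p (ℝ ∙ x)
        rw [hinf, finrank_span_singleton hx0] at this
        simpa using this
      have hsup_le : p ⊔ (ℝ ∙ x) ≤ q :=
        sup_le hpq ((Submodule.span_singleton_le_iff_mem x q).2 hxq)
      obtain ⟨s, hs1, hs2, hs3⟩ := ih (p ⊔ (ℝ ∙ x)) q hsup_le r (by omega) h2 (by omega)
      exact ⟨s, le_trans le_sup_left hs1, hs2, hs3⟩

lemma sphere_extend' (d k : ℕ) (hk : 1 ≤ k)
    (A : AffineSubspace ℝ (EuclideanSpace ℝ (Fin d))) (c : EuclideanSpace ℝ (Fin d)) (ρ : ℝ)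
    (hA : Module.finrank ℝ A.direction = k + 1) (hcA : c ∈ A) (hρ : 0 < ρ)
    (B : AffineSubspace ℝ (EuclideanSpace ℝ (Fin d))) (hBA : B ≤ A)
    (hB : Module.finrank ℝ B.direction ≤ k)
    {p q : EuclideanSpace ℝ (Fin d)}
    (hp : p ∈ (B : Set _) ∩ Metric.sphere c ρ)
    (hq : q ∈ (B : Set _) ∩ Metric.sphere c ρ) (hpq : p ≠ q) :
    ∃ S', IsKSphere d (k-1) S' ∧ S' ⊆ (A : Set _) ∩ Metric.sphere c ρ ∧
      (B : Set _) ∩ Metric.sphere c ρ ⊆ S' := by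
  haveI : Nonempty B := ⟨⟨p, hp.1⟩⟩
  set c' : EuclideanSpace ℝ (Fin d) := ↑(EuclideanGeometry.orthogonalProjection B c) with hc'
  set v : EuclideanSpace ℝ (Fin d) := c -ᵥ c' with hv
  have hvorth : v ∈ B.directionᗮ := vsub_orthogonalProjection_mem_direction_orthogonal B c
  have hc'B : c' ∈ B := orthogonalProjection_mem c
  have hc'A : c' ∈ A := hBA hc'B
  have hvA : v ∈ A.direction := AffineSubspace.vsub_mem_direction hcA hc'A
  have pyth : ∀ x : EuclideanSpace ℝ (Fin d), (inner ℝ (x -ᵥ c') v : ℝ) = 0 →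
      dist x c ^ 2 = dist x c' ^ 2 + dist c' c ^ 2 := by
    intro x hx
    have h1 : x -ᵥ c = (x -ᵥ c') + (c' -ᵥ c) := (vsub_add_vsub_cancel x c' c).symm
    have h2 : (c' -ᵥ c : EuclideanSpace ℝ (Fin d)) = -v := by rw [hv, neg_vsub_eq_vsub_rev]
    rw [dist_eq_norm_vsub (EuclideanSpace ℝ (Fin d)), h1, h2,
      dist_eq_norm_vsub (EuclideanSpace ℝ (Fin d)), dist_eq_norm_vsub (EuclideanSpace ℝ (Fin d)),
      h2]
    rw [norm_add_sq_real]
    rw [inner_neg_right, hx]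
    simp [norm_neg]
  set ρ' : ℝ := dist p c' with hρ'
  have hdist : ∀ x ∈ (B : Set _) ∩ Metric.sphere c ρ, dist x c' = ρ' := by
    intro x hx
    have hxB : x ∈ B := hx.1
    have hxs : dist x c = ρ := hx.2
    have hps : dist p c = ρ := hp.2
    have h1 : dist x c ^ 2 = dist x c' ^ 2 + dist c' c ^ 2 :=
      pyth x ((Submodule.mem_orthogonal _ _).1 hvorth (x -ᵥ c')
        (AffineSubspace.vsub_mem_direction hxB hc'B))
    have h2 : dist p c ^ 2 = dist p c' ^ 2 + dist c' c ^ 2 :=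
      pyth p ((Submodule.mem_orthogonal _ _).1 hvorth (p -ᵥ c')
        (AffineSubspace.vsub_mem_direction hp.1 hc'B))
    have hsq : dist x c' ^ 2 = ρ' ^ 2 := by rw [hρ']; nlinarith [hxs, hps, h1, h2]
    calc dist x c' = |dist x c'| := (abs_of_nonneg dist_nonneg).symm
      _ = |ρ'| := by rw [← Real.sqrt_sq_eq_abs, ← Real.sqrt_sq_eq_abs, hsq]
      _ = ρ' := abs_of_nonneg dist_nonneg
  have hρ'pos : 0 < ρ' := by
    rcases lt_or_eq_of_le (dist_nonneg : (0:ℝ) ≤ ρ') with h | h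
    · exact h
    · exfalso
      have hp0 : dist p c' = 0 := h.symm
      have hq0 : dist q c' = 0 := by rw [hdist q hq]; exact h.symm
      exact hpq (by rw [dist_eq_zero.1 hp0, dist_eq_zero.1 hq0])
  have hkey : ρ' ^ 2 + dist c' c ^ 2 = ρ ^ 2 := by
    have h2 := pyth p ((Submodule.mem_orthogonal _ _).1 hvorth (p -ᵥ c')
        (AffineSubspace.vsub_mem_direction hp.1 hc'B))
    have hps : dist p c = ρ := Metric.mem_sphere.1 hp.2
    rw [hρ']
    nlinarith [h2, hps]
  set D : Submodule ℝ (EuclideanSpace ℝ (Fin d)) := (ℝ ∙ v)ᗮ ⊓ A.direction with hD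
  have hBD : B.direction ≤ D := by
    refine le_inf ?_ (AffineSubspace.direction_le hBA)
    have h1 : (ℝ ∙ v) ≤ B.directionᗮ := (Submodule.span_singleton_le_iff_mem _ _).2 hvorth
    exact le_trans (Submodule.le_orthogonal_orthogonal _) (Submodule.orthogonal_le h1)
  have hDrank : k ≤ Module.finrank ℝ D := by
    have heq := Submodule.finrank_add_inf_finrank_orthogonal
      ((Submodule.span_singleton_le_iff_mem v A.direction).2 hvA)
    rw [hA] at heq
    have h1 : Module.finrank ℝ (ℝ ∙ v : Submodule ℝ (EuclideanSpace ℝ (Fin d))) ≤ 1 := by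
      rcases eq_or_ne v 0 with h0 | hv0
      · rw [h0, Submodule.span_zero_singleton]; simp
      · rw [finrank_span_singleton hv0]
    rw [hD]
    omega
  obtain ⟨W, hBW, hWD, hWrank⟩ := exists_intermediate_submodule' k B.direction D hBD k hB hDrank
    (by omega)
  set B'' : AffineSubspace ℝ (EuclideanSpace ℝ (Fin d)) := AffineSubspace.mk' c' W with hB''
  refine ⟨(B'' : Set _) ∩ Metric.sphere c' ρ',
    ⟨B'', c', ρ', ?_, AffineSubspace.self_mem_mk' _ _, hρ'pos, rfl⟩, ?_, ?_⟩
  · rw [hB'', AffineSubspace.direction_mk', hWrank]; omega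
  · rintro x ⟨hxB'', hxs⟩
    have hxv : x -ᵥ c' ∈ W := (AffineSubspace.mem_mk').1 hxB''
    have hxortho : (inner ℝ (x -ᵥ c') v : ℝ) = 0 := by
      have hm : x -ᵥ c' ∈ (ℝ ∙ v)ᗮ := (le_trans hWD inf_le_left) hxv
      have h0 := (Submodule.mem_orthogonal _ _).1 hm v (Submodule.mem_span_singleton_self v)
      rw [real_inner_comm] at h0; exact h0
    have hxA : x ∈ A := by
      have hrw : x = (x -ᵥ c') +ᵥ c' := (vsub_vadd x c').symm
      rw [hrw]
      exact AffineSubspace.vadd_mem_of_mem_direction ((le_trans hWD inf_le_right) hxv) hc'A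
    refine ⟨hxA, ?_⟩
    have h1 := pyth x hxortho
    have hx' : dist x c' = ρ' := Metric.mem_sphere.1 hxs
    have hsq : dist x c ^ 2 = ρ ^ 2 := by rw [h1, hx']; linarith [hkey]
    have hfin : dist x c = ρ := by
      calc dist x c = |dist x c| := (abs_of_nonneg dist_nonneg).symm
        _ = |ρ| := by rw [← Real.sqrt_sq_eq_abs, ← Real.sqrt_sq_eq_abs, hsq]
        _ = ρ := abs_of_nonneg hρ.le
    exact Metric.mem_sphere.2 hfin
  · rintro x ⟨hxB, hxs⟩
    refine ⟨(AffineSubspace.mem_mk').2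
      (hBW (AffineSubspace.vsub_mem_direction hxB hc'B)), ?_⟩
    exact Metric.mem_sphere.2 (hdist x ⟨hxB, hxs⟩)

theorem nondegenerate_sphere_tuples (d k n : ℕ) (hd : 2 ≤ d) (hk : 1 ≤ k) (hkd : k ≤ d - 1)
    (S : Set (EuclideanSpace ℝ (Fin d))) (hS : IsKSphere d k S)
    (m : ℕ) (hm : (S ∩ grid d n).ncard = m)
    (hne : (S ∩ grid d n).Nonempty)
    (hnd : ∀ S' : Set (EuclideanSpace ℝ (Fin d)), IsKSphere d (k - 1) S' → S' ⊆ S →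
      ((S' ∩ grid d n).ncard : ℝ) ≤ (m : ℝ) / 2) :
    (m : ℝ) ^ (k + 3) / 2 ^ (k + 3) ≤
      ({t : Fin (k + 3) → EuclideanSpace ℝ (Fin d) | Function.Injective t ∧
        (∀ i, t i ∈ S ∩ grid d n) ∧ HasSphericalDim d k (Set.range t)}.ncard : ℝ) := by
  classical
  obtain ⟨A, c, ρ, hA, hcA, hρ, hSeq⟩ := id hS
  have hgridfin : (grid d n).Finite := grid_finite' d n
  set G : Set (EuclideanSpace ℝ (Fin d)) := S ∩ grid d n with hG
  have hGfin : G.Finite := hgridfin.inter_of_right _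
  set Gf : Finset (EuclideanSpace ℝ (Fin d)) := hGfin.toFinset with hGfdef
  have hGcard : Gf.card = m := by
    rw [hGfdef, ← Set.ncard_eq_toFinset_card _ hGfin, hG, hm]
  have hGS : G ⊆ S := Set.inter_subset_left
  have hSA : S ⊆ (A : Set _) := by rw [hSeq]; exact Set.inter_subset_left
  have hSsph : S ⊆ Metric.sphere c ρ := by rw [hSeq]; exact Set.inter_subset_right
  -- step 1 : m ≥ 2
  have hm2 : (1 : ℝ) ≤ (m : ℝ) / 2 := by
    obtain ⟨p₀, hp₀⟩ := hne
    have hp₀S : p₀ ∈ S := hp₀.1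
    have hp₀sph : p₀ ∈ Metric.sphere c ρ := hSsph hp₀S
    have hp₀A : p₀ ∈ A := hSA hp₀S
    set p₁ : EuclideanSpace ℝ (Fin d) := (c -ᵥ p₀) +ᵥ c with hp₁def
    have hp₁A : p₁ ∈ A := AffineSubspace.vadd_mem_of_mem_direction
      (AffineSubspace.vsub_mem_direction hcA hp₀A) hcA
    have hp₁sph : p₁ ∈ Metric.sphere c ρ := by
      have : dist p₁ c = ‖c -ᵥ p₀‖ := by rw [hp₁def, dist_vadd_left]
      rw [Metric.mem_sphere, this, ← dist_eq_norm_vsub, dist_comm]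
      exact Metric.mem_sphere.1 hp₀sph
    have hp01 : p₀ ≠ p₁ := by
      intro h
      have h1 : p₁ -ᵥ p₀ = (c -ᵥ p₀) + (c -ᵥ p₀) := by
        rw [hp₁def, vadd_vsub_assoc]
      have h2 : p₁ -ᵥ p₀ = 0 := by rw [← h, vsub_self]
      have h3 : (c -ᵥ p₀ : EuclideanSpace ℝ (Fin d)) = 0 := by
        have h4 : (c -ᵥ p₀ : EuclideanSpace ℝ (Fin d)) + (c -ᵥ p₀) = 0 := h1.symm.trans h2
        have h5 : (2:ℝ) • (c -ᵥ p₀ : EuclideanSpace ℝ (Fin d)) = 0 := by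
          rw [two_smul]; exact h4
        rcases smul_eq_zero.1 h5 with h6 | h6
        · norm_num at h6
        · exact h6
      have h4 : c = p₀ := vsub_eq_zero_iff_eq.1 h3
      have : dist p₀ c = ρ := Metric.mem_sphere.1 hp₀sph
      rw [← h4, dist_self] at this
      linarith
    set B₀ := affineSpan ℝ ({p₀, p₁} : Set (EuclideanSpace ℝ (Fin d))) with hB₀
    have hB₀A : B₀ ≤ A := affineSpan_le.2 (by
      intro z hz
      rcases hz with rfl | hz
      · exact hp₀A
      · rcases hz with rfl; exact hp₁A)
    have hB₀rank : Module.finrank ℝ B₀.direction ≤ k := by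
      rw [hB₀, direction_affineSpan, vectorSpan_pair]
      rcases eq_or_ne (p₀ -ᵥ p₁ : EuclideanSpace ℝ (Fin d)) 0 with h0 | h0
      · rw [h0, Submodule.span_zero_singleton]; simp
      · rw [finrank_span_singleton h0]; omega
    have hp₀B : p₀ ∈ B₀ := subset_affineSpan ℝ _ (Set.mem_insert _ _)
    have hp₁B : p₁ ∈ B₀ := subset_affineSpan ℝ _ (Set.mem_insert_of_mem _ rfl)
    obtain ⟨S', hS'k, hS'sub, hBsub⟩ := sphere_extend' d k hk A c ρ hA hcA hρ B₀ hB₀A hB₀rank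
      ⟨hp₀B, hp₀sph⟩ ⟨hp₁B, hp₁sph⟩ hp01
    have hS'S : S' ⊆ S := by rw [hSeq]; exact hS'sub
    have h1 : 1 ≤ (S' ∩ grid d n).ncard := by
      rw [Nat.one_le_iff_ne_zero, ← Nat.pos_iff_ne_zero]
      rw [Set.ncard_pos (hgridfin.inter_of_right _)]
      exact ⟨p₀, hBsub ⟨hp₀B, hp₀sph⟩, hp₀.2⟩
    calc (1:ℝ) ≤ ((S' ∩ grid d n).ncard : ℝ) := by exact_mod_cast h1
      _ ≤ (m : ℝ) / 2 := hnd S' hS'k hS'S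
  -- step 2 : the main bound
  have hbound : ∀ B : AffineSubspace ℝ (EuclideanSpace ℝ (Fin d)), B ≤ A →
      Module.finrank ℝ B.direction ≤ k →
      (((B : Set _) ∩ G).ncard : ℝ) ≤ (m : ℝ) / 2 := by
    intro B hBA hBk
    by_cases hex : ∃ x ∈ (B : Set _) ∩ Metric.sphere c ρ,
        ∃ y ∈ (B : Set _) ∩ Metric.sphere c ρ, x ≠ y
    · obtain ⟨x, hx, y, hy, hxy⟩ := hex
      obtain ⟨S', hS'k, hS'sub, hBsub⟩ := sphere_extend' d k hk A c ρ hA hcA hρ B hBA hBk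
        hx hy hxy
      have hsub : (B : Set _) ∩ G ⊆ S' ∩ grid d n := by
        rintro z ⟨hzB, hzS, hzg⟩
        exact ⟨hBsub ⟨hzB, hSsph hzS⟩, hzg⟩
      have hle := hnd S' hS'k (by rw [hSeq]; exact hS'sub)
      refine le_trans ?_ hle
      exact_mod_cast Nat.cast_le.2 (Set.ncard_le_ncard hsub (hgridfin.inter_of_right _))
    · push_neg at hex
      have hsub : ((B : Set _) ∩ G).Subsingleton := by
        intro x hx y hy
        exact hex x ⟨hx.1, hSsph hx.2.1⟩ y ⟨hy.1, hSsph hy.2.1⟩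
      have h1 : ((B : Set _) ∩ G).ncard ≤ 1 :=
        (Set.ncard_le_one (hGfin.inter_of_right _)).2 hsub
      calc (((B : Set _) ∩ G).ncard : ℝ) ≤ 1 := by exact_mod_cast h1
        _ ≤ (m:ℝ)/2 := hm2
  -- snoc preserves affine independence
  have hsnocind : ∀ (j : ℕ) (v : Fin (j+1) → EuclideanSpace ℝ (Fin d)),
      AffineIndependent ℝ v → ∀ x, x ∉ affineSpan ℝ (Set.range v) →
      AffineIndependent ℝ (Fin.snoc v x : Fin (j+2) → EuclideanSpace ℝ (Fin d)) := by
    intro j v hv x hx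
    apply AffineIndependent.affineIndependent_of_notMem_span (i := Fin.last (j+1))
    · have he : Function.Injective
          (fun y : {y : Fin (j+2) // y ≠ Fin.last (j+1)} => Fin.castPred y.1 y.2) := by
        intro a b hab
        exact Subtype.ext (Fin.castPred_inj.1 hab)
      have h0 := hv.comp_embedding ⟨_, he⟩
      convert h0 using 1
      · rfl
      funext y
      show (Fin.snoc v x : Fin (j+2) → _) y.1 = v (Fin.castPred y.1 y.2)
      have h1 : (Fin.snoc v x : Fin (j+2) → _) (Fin.castSucc (Fin.castPred y.1 y.2))
          = v (Fin.castPred y.1 y.2) := Fin.snoc_castSucc _ _ _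
      rwa [Fin.castSucc_castPred] at h1
    · have himg : (Fin.snoc v x : Fin (j+2) → EuclideanSpace ℝ (Fin d)) ''
          {y | y ≠ Fin.last (j+1)} = Set.range v := by
        ext z
        constructor
        · rintro ⟨y, hy, rfl⟩
          refine ⟨Fin.castPred y hy, ?_⟩
          have h1 : (Fin.snoc v x : Fin (j+2) → _) (Fin.castSucc (Fin.castPred y hy))
              = v (Fin.castPred y hy) := Fin.snoc_castSucc _ _ _
          rw [Fin.castSucc_castPred] at h1
          exact h1.symm
        · rintro ⟨i, rfl⟩
          exact ⟨Fin.castSucc i, (Fin.castSucc_lt_last i).ne, Fin.snoc_castSucc _ _ _⟩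
      rw [himg, Fin.snoc_last]
      exact hx
  -- the independent tuple sets
  have htfin : ∀ j : ℕ,
      ({t : Fin (j+1) → EuclideanSpace ℝ (Fin d) | (∀ i, t i ∈ G) ∧ AffineIndependent ℝ t}).Finite :=
    fun j => (tuple_finite' hGfin (j+1)).subset (fun t ht => ht.1)
  -- counting induction
  have hcount : ∀ j : ℕ, j ≤ k + 1 →
      (m:ℝ) * ((m:ℝ)/2)^j ≤ (((htfin j).toFinset.card : ℝ)) := by
    intro j
    induction j with
    | zero =>
      intro _
      have hc : Gf.card ≤ (htfin 0).toFinset.card := by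
        apply Finset.card_le_card_of_injOn (fun x => (fun _ : Fin 1 => x))
        · intro x hx
          rw [Finset.mem_coe, Set.Finite.mem_toFinset]
          haveI : Subsingleton (Fin (0+1)) := ⟨fun a b => Fin.ext (by omega)⟩
          refine ⟨fun _ => (Set.Finite.mem_toFinset _).1 hx, affineIndependent_of_subsingleton ℝ _⟩
        · intro a _ b _ hab
          exact congrFun hab 0
      rw [pow_zero, mul_one]
      calc (m:ℝ) = (Gf.card : ℝ) := by rw [hGcard]
        _ ≤ _ := by exact_mod_cast hc
    | succ j ih =>
      intro hj
      have hVle := ih (by omega)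
      have hstep := snoc_card_le' ((htfin (j+1)).toFinset) ((htfin j).toFinset) ((m:ℝ)/2) ?_
      · calc (m:ℝ) * ((m:ℝ)/2)^(j+1) = ((m:ℝ) * ((m:ℝ)/2)^j) * ((m:ℝ)/2) := by ring
          _ ≤ ((htfin j).toFinset.card : ℝ) * ((m:ℝ)/2) := by
              apply mul_le_mul_of_nonneg_right hVle (by positivity)
          _ ≤ _ := hstep
      · intro v hv
        rw [Set.Finite.mem_toFinset] at hv
        obtain ⟨hvG, hvind⟩ := hv
        set B := affineSpan ℝ (Set.range v) with hBdef
        have hBA : B ≤ A := affineSpan_le.2 (by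
          rintro z ⟨i, rfl⟩; exact hSA (hvG i).1)
        have hBrank : Module.finrank ℝ B.direction ≤ k := by
          rw [hBdef, direction_affineSpan]
          have hfr := hvind.finrank_vectorSpan (by simp : Fintype.card (Fin (j+1)) = j + 1)
          omega
        have hbadbound := hbound B hBA hBrank
        have hbadfin : ((B : Set _) ∩ G).Finite := hGfin.inter_of_right _
        refine ⟨Gf \ hbadfin.toFinset, ?_, ?_⟩
        · have hsubu : Gf ⊆ (Gf \ hbadfin.toFinset) ∪ hbadfin.toFinset := by
            intro z hz
            by_cases hzb : z ∈ hbadfin.toFinset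
            · exact Finset.mem_union_right _ hzb
            · exact Finset.mem_union_left _ (Finset.mem_sdiff.2 ⟨hz, hzb⟩)
          have h1 : Gf.card ≤ (Gf \ hbadfin.toFinset).card + hbadfin.toFinset.card :=
            le_trans (Finset.card_le_card hsubu) (Finset.card_union_le _ _)
          have hbc : (hbadfin.toFinset.card : ℝ) ≤ (m:ℝ)/2 := by
            rw [← Set.ncard_eq_toFinset_card _ hbadfin]
            exact hbadbound
          have h2 : (m:ℝ) ≤ ((Gf \ hbadfin.toFinset).card : ℝ) + (hbadfin.toFinset.card : ℝ) := by
            rw [← hGcard]; exact_mod_cast h1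
          linarith
        · intro x hx
          rw [Finset.mem_sdiff] at hx
          have hxG : x ∈ G := (Set.Finite.mem_toFinset _).1 hx.1
          have hxB : x ∉ (B : Set _) := fun h => hx.2 ((Set.Finite.mem_toFinset _).2 ⟨h, hxG⟩)
          rw [Set.Finite.mem_toFinset]
          constructor
          · intro i
            refine Fin.lastCases ?_ ?_ i
            · rw [Fin.snoc_last]; exact hxG
            · intro i'; rw [Fin.snoc_castSucc]; exact hvG i'
          · exact hsnocind j v hvind x (fun h => hxB h)
  -- step 4 : m ≥ 2k + 2
  have hmpos : (0:ℝ) < (m:ℝ) := by linarith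
  have hkR : (1:ℝ) ≤ (k:ℝ) := by exact_mod_cast hk
  have hmk : (2*(k:ℝ) + 2) ≤ (m:ℝ) := by
    have hck := hcount k (by omega)
    have hVne : ((htfin k).toFinset).Nonempty := by
      rw [← Finset.card_pos]
      by_contra hcard
      push_neg at hcard
      have hc0 : ((htfin k).toFinset.card : ℝ) = 0 := by
        have : (htfin k).toFinset.card = 0 := by omega
        exact_mod_cast this
      rw [hc0] at hck
      have : (0:ℝ) < (m:ℝ) * ((m:ℝ)/2)^k := by positivity
      linarith
    obtain ⟨v, hv⟩ := hVne
    rw [Set.Finite.mem_toFinset] at hv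
    obtain ⟨hvG, hvind⟩ := hv
    set B := affineSpan ℝ (Set.range v) with hBdef
    have hBA : B ≤ A := affineSpan_le.2 (by rintro z ⟨i, rfl⟩; exact hSA (hvG i).1)
    have hBrank : Module.finrank ℝ B.direction ≤ k := by
      rw [hBdef, direction_affineSpan]
      have hfr := hvind.finrank_vectorSpan (by simp : Fintype.card (Fin (k+1)) = k + 1)
      omega
    have h01 : (⟨0, by omega⟩ : Fin (k+1)) ≠ ⟨1, by omega⟩ := by
      intro h; simpa using congrArg Fin.val h
    have hvne : v ⟨0, by omega⟩ ≠ v ⟨1, by omega⟩ := fun h => h01 (hvind.injective h)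
    have hmem : ∀ i, v i ∈ (B : Set _) ∩ Metric.sphere c ρ := fun i =>
      ⟨subset_affineSpan ℝ _ ⟨i, rfl⟩, hSsph (hvG i).1⟩
    obtain ⟨S', hS'k, hS'sub, hBsub⟩ := sphere_extend' d k hk A c ρ hA hcA hρ B hBA hBrank
      (hmem _) (hmem _) hvne
    have hle := hnd S' hS'k (by rw [hSeq]; exact hS'sub)
    have hsub : Set.range v ⊆ S' ∩ grid d n := by
      rintro z ⟨i, rfl⟩
      exact ⟨hBsub (hmem i), (hvG i).2⟩
    have hrc : (Set.range v).ncard = k + 1 := by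
      rw [← Nat.card_coe_set_eq, Nat.card_range_of_injective hvind.injective]
      simp
    have h2 : (k + 1 : ℕ) ≤ (S' ∩ grid d n).ncard := by
      rw [← hrc]
      exact Set.ncard_le_ncard hsub (hgridfin.inter_of_right _)
    have h3 : ((k:ℝ) + 1) ≤ (m:ℝ)/2 := le_trans (by exact_mod_cast h2) hle
    linarith
  -- final step
  set T : Set (Fin (k+3) → EuclideanSpace ℝ (Fin d)) :=
    {t | Function.Injective t ∧ (∀ i, t i ∈ S ∩ grid d n) ∧ HasSphericalDim d k (Set.range t)}
    with hT
  have hTfin : T.Finite := (tuple_finite' hGfin (k+3)).subset (fun t ht => fun i => ht.2.1 i)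
  have hfinal : (((htfin (k+1)).toFinset.card : ℝ)) * ((m:ℝ) - ((k:ℝ)+2))
      ≤ (hTfin.toFinset.card : ℝ) := by
    apply snoc_card_le' (j := k+2)
    intro v hv
    rw [Set.Finite.mem_toFinset] at hv
    obtain ⟨hvG, hvind⟩ := hv
    refine ⟨Gf \ Finset.image v Finset.univ, ?_, ?_⟩
    · have himg : (Finset.image v Finset.univ).card ≤ k + 2 :=
        le_trans Finset.card_image_le (by simp)
      have hsubu : Gf ⊆ (Gf \ Finset.image v Finset.univ) ∪ Finset.image v Finset.univ := by
        intro z hz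
        by_cases hzb : z ∈ Finset.image v Finset.univ
        · exact Finset.mem_union_right _ hzb
        · exact Finset.mem_union_left _ (Finset.mem_sdiff.2 ⟨hz, hzb⟩)
      have h1 : Gf.card ≤ (Gf \ Finset.image v Finset.univ).card
          + (Finset.image v Finset.univ).card :=
        le_trans (Finset.card_le_card hsubu) (Finset.card_union_le _ _)
      have himgr : ((Finset.image v Finset.univ).card : ℝ) ≤ (k:ℝ)+2 := by exact_mod_cast himg
      have h2 : (m:ℝ) ≤ ((Gf \ Finset.image v Finset.univ).card : ℝ)
          + ((Finset.image v Finset.univ).card : ℝ) := by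
        rw [← hGcard]; exact_mod_cast h1
      linarith
    · intro x hx
      rw [Finset.mem_sdiff] at hx
      have hxG : x ∈ G := (Set.Finite.mem_toFinset _).1 hx.1
      have hxnr : ∀ i, x ≠ v i := fun i h =>
        hx.2 (Finset.mem_image.2 ⟨i, Finset.mem_univ _, h.symm⟩)
      rw [Set.Finite.mem_toFinset]
      have hcoord : ∀ i, (Fin.snoc v x : Fin (k+3) → EuclideanSpace ℝ (Fin d)) i ∈ S ∩ grid d n := by
        intro i
        refine Fin.lastCases ?_ ?_ i
        · rw [Fin.snoc_last]; exact hxG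
        · intro i'; rw [Fin.snoc_castSucc]; exact hvG i'
      refine ⟨?_, hcoord, ⟨⟨S, hS, ?_⟩, ?_⟩⟩
      · intro a b hab
        rcases Fin.eq_castSucc_or_eq_last a with ⟨a', rfl⟩ | rfl <;>
          rcases Fin.eq_castSucc_or_eq_last b with ⟨b', rfl⟩ | rfl
        · rw [Fin.snoc_castSucc, Fin.snoc_castSucc] at hab
          exact congrArg Fin.castSucc (hvind.injective hab)
        · rw [Fin.snoc_castSucc, Fin.snoc_last] at hab
          exact absurd hab.symm (hxnr a')
        · rw [Fin.snoc_last, Fin.snoc_castSucc] at hab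
          exact absurd hab (hxnr b')
        · rfl
      · rintro z ⟨i, rfl⟩
        exact (hcoord i).1
      · rintro ⟨S'', ⟨A'', c'', ρ'', hA'', hc'', hρ'', hSeq''⟩, hsub⟩
        have hk1 : k - 1 + 1 = k := by omega
        have hrsub : Set.range v ⊆ S'' := by
          rintro z ⟨i, rfl⟩
          have hmemr := hsub ⟨Fin.castSucc i, rfl⟩
          rwa [Fin.snoc_castSucc] at hmemr
        have hspan : affineSpan ℝ (Set.range v) ≤ A'' := affineSpan_le.2
          (fun z hz => ((hSeq'' ▸ hrsub hz) : z ∈ (A'' : Set _) ∩ Metric.sphere c'' ρ'').1)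
        have hdirle : (affineSpan ℝ (Set.range v)).direction ≤ A''.direction :=
          AffineSubspace.direction_le hspan
        rw [direction_affineSpan] at hdirle
        have hfr1 : Module.finrank ℝ (vectorSpan ℝ (Set.range v))
            ≤ Module.finrank ℝ A''.direction := Submodule.finrank_mono hdirle
        have hfr2 := hvind.finrank_vectorSpan (by simp : Fintype.card (Fin (k+2)) = (k+1) + 1)
        rw [hfr2, hA'', hk1] at hfr1
        omega
  have hVcount := hcount (k+1) (le_refl _)
  have hwnn : (0:ℝ) ≤ (m:ℝ) - ((k:ℝ)+2) := by linarith
  have hchain : ((m:ℝ) * ((m:ℝ)/2)^(k+1)) * ((m:ℝ) - ((k:ℝ)+2)) ≤ (hTfin.toFinset.card : ℝ) :=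
    le_trans (mul_le_mul_of_nonneg_right hVcount hwnn) hfinal
  have harith : (m:ℝ)^(k+3)/2^(k+3) ≤ ((m:ℝ) * ((m:ℝ)/2)^(k+1)) * ((m:ℝ) - ((k:ℝ)+2)) := by
    have h1 : (m:ℝ)^(k+3)/2^(k+3) = ((m:ℝ)/2)^(k+1) * ((m:ℝ)/2)^2 := by
      rw [← div_pow]; ring
    rw [h1]
    have h2 : ((m:ℝ)/2)^2 ≤ (m:ℝ) * ((m:ℝ) - ((k:ℝ)+2)) := by
      nlinarith [hmk, hkR, hmpos,
        mul_nonneg (by linarith : (0:ℝ) ≤ (m:ℝ) - (2*(k:ℝ)+2)) hmpos.le,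
        mul_nonneg (by linarith : (0:ℝ) ≤ (k:ℝ) - 1) hmpos.le]
    calc ((m:ℝ)/2)^(k+1) * ((m:ℝ)/2)^2
        ≤ ((m:ℝ)/2)^(k+1) * ((m:ℝ) * ((m:ℝ) - ((k:ℝ)+2))) :=
          mul_le_mul_of_nonneg_left h2 (by positivity)
      _ = ((m:ℝ) * ((m:ℝ)/2)^(k+1)) * ((m:ℝ) - ((k:ℝ)+2)) := by ring
  have hTcard : (T.ncard : ℕ) = hTfin.toFinset.card := Set.ncard_eq_toFinset_card _ hTfin
  calc (m : ℝ) ^ (k + 3) / 2 ^ (k + 3)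
      ≤ ((m:ℝ) * ((m:ℝ)/2)^(k+1)) * ((m:ℝ) - ((k:ℝ)+2)) := harith
    _ ≤ (hTfin.toFinset.card : ℝ) := hchain
    _ = (T.ncard : ℝ) := by rw [hTcard]
end

section
/- Let f(a,b) = (20a^6 + 25a^5 b − 7a^4 b^2 + 28a^3 b^3 − 20a^2 b^4 + 3ab^5 − b^6)/(240 a^5 (a+b)^2 (a^2+b^2)) and let γ = 4/15 + Σ_{a=2}^∞ Σ_{1 ≤ b < a, gcd(a,b)=1} 2(3+(−1)^{a+b}) f(a,b). For every integer N ≥ 2, the partial sum s_N = Σ_{a=2}^{N} Σ_{1 ≤ b < a, gcd(a,b)=1} 2(3+(−1)^{a+b}) f(a,b) satisfies 0 ≤ γ − 4/15 − s_N ≤ 2.2/N. -/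
/-- The rational function `f(a,b)` from the definition of `γ`. -/
noncomputable def fab (a b : ℕ) : ℝ :=
  (20 * (a : ℝ) ^ 6 + 25 * (a : ℝ) ^ 5 * (b : ℝ) - 7 * (a : ℝ) ^ 4 * (b : ℝ) ^ 2
      + 28 * (a : ℝ) ^ 3 * (b : ℝ) ^ 3 - 20 * (a : ℝ) ^ 2 * (b : ℝ) ^ 4
      + 3 * (a : ℝ) * (b : ℝ) ^ 5 - (b : ℝ) ^ 6) /
    (240 * (a : ℝ) ^ 5 * ((a : ℝ) + (b : ℝ)) ^ 2 * ((a : ℝ) ^ 2 + (b : ℝ) ^ 2))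

/-- The summand indexed by `a` in the definition of `γ`. -/
noncomputable def gammaTerm (a : ℕ) : ℝ :=
  ∑ b ∈ (Finset.Ico 1 a).filter (fun b => Nat.gcd a b = 1),
    2 * (3 + (-1 : ℝ) ^ (a + b)) * fab a b

/-- The constant `γ = 4/15 + Σ_{a≥2} Σ_{1 ≤ b < a, gcd(a,b)=1} 2(3+(−1)^{a+b}) f(a,b)`.
(The summands with `a < 2` are empty sums, so the outer sum may run over all of `ℕ`.) -/
noncomputable def gammaConst : ℝ :=
  4 / 15 + ∑' a : ℕ, gammaTerm a

/-- The partial sum `s_N = Σ_{a=2}^{N} Σ_{1 ≤ b < a, gcd(a,b)=1} 2(3+(−1)^{a+b}) f(a,b)`. -/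
noncomputable def partialSum (N : ℕ) : ℝ :=
  ∑ a ∈ Finset.Icc 2 N, gammaTerm a

lemma fab_nonneg {a b : ℕ} (hb : 1 ≤ b) (hba : b < a) : 0 ≤ fab a b := by
  have hb' : (1 : ℝ) ≤ (b : ℝ) := by exact_mod_cast hb
  have hba' : (b : ℝ) + 1 ≤ (a : ℝ) := by exact_mod_cast hba
  have ha : (1 : ℝ) ≤ (a : ℝ) := by linarith
  have hab : (0 : ℝ) ≤ (a : ℝ) - b := by linarith
  apply div_nonneg
  · have h1 : (0:ℝ) ≤ ((a:ℝ) - b) * ((a:ℝ)^4 * b) := by positivity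
    have h2 : (0:ℝ) ≤ ((a:ℝ) - b) * ((a:ℝ)^2 * (b:ℝ)^3) := by positivity
    have h3 : (0:ℝ) ≤ ((a:ℝ) - b) * (b:ℝ)^5 := by positivity
    have h4 : (0:ℝ) ≤ (a:ℝ)^6 := by positivity
    have h5 : (0:ℝ) ≤ (a:ℝ)^4 * (b:ℝ)^2 := by positivity
    have h6 : (0:ℝ) ≤ (a:ℝ)^2 * (b:ℝ)^4 := by positivity
    have h7 : (0:ℝ) ≤ (b:ℝ)^6 := by positivity
    nlinarith [h1, h2, h3, h4, h5, h6, h7]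
  · positivity

lemma fab_le {a b : ℕ} (hb : 1 ≤ b) (hba : b < a) : fab a b ≤ 1 / (5 * (a : ℝ) ^ 3) := by
  have hb' : (1 : ℝ) ≤ (b : ℝ) := by exact_mod_cast hb
  have hba' : (b : ℝ) + 1 ≤ (a : ℝ) := by exact_mod_cast hba
  have ha : (1 : ℝ) ≤ (a : ℝ) := by linarith
  have hapos : (0 : ℝ) < (a : ℝ) := by linarith
  have hbpos : (0 : ℝ) < (b : ℝ) := by linarith
  unfold fab
  rw [div_le_div_iff₀ (by positivity) (by positivity)]
  have key : 20 * (a : ℝ) ^ 6 + 25 * (a : ℝ) ^ 5 * (b : ℝ) - 7 * (a : ℝ) ^ 4 * (b : ℝ) ^ 2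
      + 28 * (a : ℝ) ^ 3 * (b : ℝ) ^ 3 - 20 * (a : ℝ) ^ 2 * (b : ℝ) ^ 4
      + 3 * (a : ℝ) * (b : ℝ) ^ 5 - (b : ℝ) ^ 6 ≤ 48 * (a : ℝ) ^ 6 := by
    have hab : (0:ℝ) ≤ (a:ℝ) - b := by linarith
    have inner : (0:ℝ) ≤ 28*(a:ℝ)^5 + 3*(a:ℝ)^4*b + 10*(a:ℝ)^3*b^2 - 18*(a:ℝ)^2*b^3 + 2*(a:ℝ)*b^4 - b^5 := by
      nlinarith [mul_nonneg hab (by positivity : (0:ℝ) ≤ (a:ℝ)^4),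
        mul_nonneg hab (by positivity : (0:ℝ) ≤ (a:ℝ)^3 * b),
        mul_nonneg hab (by positivity : (0:ℝ) ≤ (a:ℝ)^2 * (b:ℝ)^2),
        mul_nonneg hab (by positivity : (0:ℝ) ≤ (b:ℝ)^4),
        pow_pos hapos 5, mul_pos (pow_pos hapos 4) hbpos]
    nlinarith [mul_nonneg hab inner]
  have h2' : (a:ℝ)^4 ≤ ((a:ℝ) + b)^2 * ((a:ℝ)^2 + b^2) := by
    nlinarith [mul_pos (mul_pos (mul_pos hapos hapos) hapos) hbpos,
      mul_pos (mul_pos (mul_pos hapos hbpos) hbpos) hbpos,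
      sq_nonneg ((a:ℝ)*b)]
  have h2 : (240 : ℝ) * (a : ℝ) ^ 9 ≤ 240 * (a : ℝ) ^ 5 * ((a : ℝ) + (b : ℝ)) ^ 2 * ((a : ℝ) ^ 2 + (b : ℝ) ^ 2) := by
    nlinarith [mul_le_mul_of_nonneg_left h2' (by positivity : (0:ℝ) ≤ 240 * (a:ℝ)^5)]
  nlinarith [mul_le_mul_of_nonneg_right key (by positivity : (0:ℝ) ≤ 5 * (a:ℝ)^3), h2]

lemma coeff_bounds (k : ℕ) : (0 : ℝ) ≤ 2 * (3 + (-1 : ℝ) ^ k) ∧ 2 * (3 + (-1 : ℝ) ^ k) ≤ 8 := by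
  rcases neg_one_pow_eq_or ℝ k with h | h <;> rw [h] <;> norm_num

lemma gammaTerm_nonneg (a : ℕ) : 0 ≤ gammaTerm a := by
  apply Finset.sum_nonneg
  intro b hb
  simp only [Finset.mem_filter, Finset.mem_Ico] at hb
  exact mul_nonneg (coeff_bounds (a + b)).1 (fab_nonneg hb.1.1 hb.1.2)

lemma gammaTerm_le_aux {a : ℕ} (ha : 2 ≤ a) :
    gammaTerm a ≤ ((a : ℝ) - 1) * (8 * (1 / (5 * (a : ℝ) ^ 3))) := by
  have ha' : (2 : ℝ) ≤ (a : ℝ) := by exact_mod_cast ha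
  have h1 : gammaTerm a ≤ ((Finset.Ico 1 a).filter (fun b => Nat.gcd a b = 1)).card •
      (8 * (1 / (5 * (a : ℝ) ^ 3))) := by
    apply Finset.sum_le_card_nsmul
    intro b hb
    simp only [Finset.mem_filter, Finset.mem_Ico] at hb
    have := fab_nonneg hb.1.1 hb.1.2
    have := fab_le hb.1.1 hb.1.2
    have hc := coeff_bounds (a + b)
    nlinarith [pow_pos (by linarith : (0:ℝ) < (a:ℝ)) 3]
  have hcard : ((Finset.Ico 1 a).filter (fun b => Nat.gcd a b = 1)).card ≤ a - 1 := by
    calc ((Finset.Ico 1 a).filter (fun b => Nat.gcd a b = 1)).card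
        ≤ (Finset.Ico 1 a).card := Finset.card_filter_le _ _
      _ = a - 1 := Nat.card_Ico 1 a
  have hcard' : (((Finset.Ico 1 a).filter (fun b => Nat.gcd a b = 1)).card : ℝ) ≤ (a : ℝ) - 1 := by
    have : ((a - 1 : ℕ) : ℝ) = (a : ℝ) - 1 := by
      rw [Nat.cast_sub (by omega)]; norm_num
    rw [← this]
    exact_mod_cast hcard
  have hpos : (0 : ℝ) ≤ 8 * (1 / (5 * (a : ℝ) ^ 3)) := by positivity
  rw [nsmul_eq_mul] at h1
  exact h1.trans (mul_le_mul_of_nonneg_right hcard' hpos)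

lemma gammaTerm_le {a : ℕ} (ha : 2 ≤ a) :
    gammaTerm a ≤ 8 / 5 * (1 / ((a : ℝ) - 1) - 1 / (a : ℝ)) := by
  have ha' : (2 : ℝ) ≤ (a : ℝ) := by exact_mod_cast ha
  refine (gammaTerm_le_aux ha).trans ?_
  rw [← sub_nonneg]
  have h1 : (0:ℝ) < (a:ℝ) - 1 := by linarith
  have h2 : (0:ℝ) < (a:ℝ) := by linarith
  have e : 8 / 5 * (1 / ((a : ℝ) - 1) - 1 / (a : ℝ)) - ((a : ℝ) - 1) * (8 * (1 / (5 * (a : ℝ) ^ 3)))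
      = (8 * (2 * (a:ℝ) - 1)) / (5 * ((a:ℝ) - 1) * (a:ℝ) ^ 3) := by
    field_simp
    ring
  rw [e]
  apply div_nonneg (by linarith) (by positivity)

lemma gammaTerm_eq_zero {a : ℕ} (ha : a ≤ 1) : gammaTerm a = 0 := by
  unfold gammaTerm
  rw [Finset.Ico_eq_empty (by omega)]
  simp

lemma gammaTerm_le_sq (a : ℕ) : gammaTerm a ≤ 16 / 5 * (1 / (a : ℝ) ^ 2) := by
  rcases le_or_gt a 1 with h | h
  · rw [gammaTerm_eq_zero h]; positivity
  · have ha' : (2 : ℝ) ≤ (a : ℝ) := by exact_mod_cast h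
    refine (gammaTerm_le_aux h).trans ?_
    rw [← sub_nonneg]
    have h2 : (0:ℝ) < (a:ℝ) := by linarith
    have e : 16 / 5 * (1 / (a : ℝ) ^ 2) - ((a : ℝ) - 1) * (8 * (1 / (5 * (a : ℝ) ^ 3)))
        = (16 * (a:ℝ) - 8 * ((a:ℝ) - 1)) / (5 * (a:ℝ) ^ 3) := by
      field_simp
    rw [e]
    apply div_nonneg (by linarith) (by positivity)

lemma summable_gammaTerm : Summable gammaTerm := by
  apply Summable.of_nonneg_of_le gammaTerm_nonneg gammaTerm_le_sq
  have : Summable (fun n : ℕ => 1 / (n : ℝ) ^ 2) := Real.summable_one_div_nat_pow.2 (by norm_num)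
  exact this.mul_left _

theorem gamma_tail_bound (N : ℕ) (hN : 2 ≤ N) :
    0 ≤ gammaConst - 4 / 15 - partialSum N ∧
    gammaConst - 4 / 15 - partialSum N ≤ 2.2 / (N : ℝ) := by
  have hN' : (2 : ℝ) ≤ (N : ℝ) := by exact_mod_cast hN
  have hNpos : (0 : ℝ) < (N : ℝ) := by linarith
  have hsplit := Summable.sum_add_tsum_nat_add (f := gammaTerm) (N + 1) summable_gammaTerm
  have hpart : partialSum N = ∑ i ∈ Finset.range (N + 1), gammaTerm i := by
    unfold partialSum
    apply Finset.sum_subset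
    · intro x hx
      simp only [Finset.mem_Icc] at hx
      simp only [Finset.mem_range]
      omega
    · intro x hx hx'
      simp only [Finset.mem_range] at hx
      simp only [Finset.mem_Icc, not_and, not_le] at hx'
      exact gammaTerm_eq_zero (by omega)
  have heq : gammaConst - 4 / 15 - partialSum N = ∑' i : ℕ, gammaTerm (i + (N + 1)) := by
    unfold gammaConst
    rw [hpart]
    linarith [hsplit]
  rw [heq]
  set g : ℕ → ℝ := fun i => 1 / ((N : ℝ) + i) with hg
  constructor
  · exact tsum_nonneg fun i => gammaTerm_nonneg _
  · apply Real.tsum_le_of_sum_range_le (fun i => gammaTerm_nonneg _)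
    intro n
    have hstep : ∀ i ∈ Finset.range n,
        gammaTerm (i + (N + 1)) ≤ 8 / 5 * (g i - g (i + 1)) := by
      intro i _
      have h := gammaTerm_le (a := i + (N + 1)) (by omega)
      have e2 : ((i + (N + 1) : ℕ) : ℝ) - 1 = (N : ℝ) + i := by push_cast; ring
      have e1 : ((i + (N + 1) : ℕ) : ℝ) = (N : ℝ) + ((i : ℕ) + 1 : ℕ) := by push_cast; ring
      rw [e2, e1] at h
      exact h
    calc ∑ i ∈ Finset.range n, gammaTerm (i + (N + 1))
        ≤ ∑ i ∈ Finset.range n, 8 / 5 * (g i - g (i + 1)) := Finset.sum_le_sum hstep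
      _ = 8 / 5 * ∑ i ∈ Finset.range n, (g i - g (i + 1)) := by rw [Finset.mul_sum]
      _ = 8 / 5 * (g 0 - g n) := by rw [Finset.sum_range_sub' g n]
      _ ≤ 2.2 / (N : ℝ) := by
          have hgn : (0 : ℝ) ≤ g n := by simp only [hg]; positivity
          have hg0 : g 0 = 1 / (N : ℝ) := by simp [hg]
          have step1 : 8 / 5 * (g 0 - g n) ≤ (8 / 5) / (N : ℝ) := by
            rw [hg0, mul_sub, mul_one_div]
            nlinarith
          refine step1.trans ?_
          rw [div_le_div_iff₀ hNpos hNpos]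
          nlinarith
end
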